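/- arXiv:2101.06877 — 2 statements merged into one kernel-verified Lean document; each statement's English description precedes it below -/
import Mathlib

section
/- Every strongly Deza graph has at most five distinct eigenvalues. -/
/-!
Let `A` and `B` be the adjacency matrices of `G` and of its child `G_B`, and `J` the all-ones
matrix. Counting common neighbours gives `A² = (k - a) I + a J + (b - a) B`, and strong regularity
of `G_B` gives `B² = (k' - m') I + (l' - m') B + m' J`. As `J` absorbs `B` and `J`, the matrix
`M := A² - (k - a) I ∈ span {J, B}` satisfies
`M² - (b - a)(l' - m') M - (b - a)² (k' - m') I ∈ ℝ J`. Since `G` is `k`-regular,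
`(A - k I) J = 0`, so `A` is a root of a monic polynomial of degree `5`, and every eigenvalue of `A`
is a root of it.
-/

open scoped Classical

noncomputable section

namespace DezaPaper

open SimpleGraph

variable {V : Type*}

/-- `G` is `k`-regular: every vertex has exactly `k` neighbours. -/
def IsRegular (G : SimpleGraph V) (k : ℕ) : Prop :=
  ∀ v, Nat.card (G.neighborSet v) = k

/-- `G` is a Deza graph with parameters `(n, k, b, a)`:  a `k`-regular graph on `n`
vertices, not complete and not edgeless, in which every pair of distinct vertices has
`b` or `a` common neighbours, where `a ≤ b`. -/
def IsDezaWith (G : SimpleGraph V) (n k b a : ℕ) : Prop :=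
  Nat.card V = n ∧ IsRegular G k ∧ a ≤ b ∧ G ≠ ⊤ ∧ G ≠ ⊥ ∧
    ∀ u v : V, u ≠ v →
      Nat.card (G.commonNeighbors u v) = b ∨ Nat.card (G.commonNeighbors u v) = a

/-- The child of `G` associated with the value `c`: two distinct vertices are adjacent
iff they have exactly `c` common neighbours in `G`.  (For a Deza graph with parameters
`(n,k,b,a)`, `child G a` is the child `G_A` and `child G b` is the child `G_B`.) -/
def child (G : SimpleGraph V) (c : ℕ) : SimpleGraph V where
  Adj u v := u ≠ v ∧ Nat.card (G.commonNeighbors u v) = c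
  symm := ⟨by
    rintro u v ⟨h1, h2⟩
    refine ⟨h1.symm, ?_⟩
    rwa [SimpleGraph.commonNeighbors_symm]⟩
  loopless := ⟨fun v h => h.1 rfl⟩

/-- `G` is a strongly regular graph with parameters `(n, k, l, m)`:  a `k`-regular
graph on `n` vertices, not complete and not edgeless, any two adjacent vertices have
`l` common neighbours and any two distinct non-adjacent vertices have `m` common
neighbours. -/
def IsSRGraphWith (G : SimpleGraph V) (n k l m : ℕ) : Prop :=
  Nat.card V = n ∧ IsRegular G k ∧ G ≠ ⊤ ∧ G ≠ ⊥ ∧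
    (∀ u v, G.Adj u v → Nat.card (G.commonNeighbors u v) = l) ∧
    (∀ u v, u ≠ v → ¬G.Adj u v → Nat.card (G.commonNeighbors u v) = m)

/-- `G` is a strongly Deza graph with parameters `(n, k, b, a)`: a Deza graph with
`b > a` whose two children are strongly regular graphs. -/
def IsStronglyDezaWith (G : SimpleGraph V) (n k b a : ℕ) : Prop :=
  IsDezaWith G n k b a ∧ a < b ∧
    (∃ k' l' m', IsSRGraphWith (child G a) n k' l' m') ∧
    (∃ k' l' m', IsSRGraphWith (child G b) n k' l' m')

/-- The real adjacency matrix of `G`. -/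
def adjMat [Fintype V] [DecidableEq V] (G : SimpleGraph V) : Matrix V V ℝ :=
  Matrix.of fun u v => if G.Adj u v then (1 : ℝ) else 0

/-- The spectrum of `G`: the multiset of real eigenvalues (with multiplicity) of its
real adjacency matrix, i.e. the roots of its characteristic polynomial. -/
def spectrum [Fintype V] [DecidableEq V] (G : SimpleGraph V) : Multiset ℝ :=
  (adjMat G).charpoly.roots

/-- `G` is integral: all its eigenvalues are integers. -/
def IsIntegral [Fintype V] [DecidableEq V] (G : SimpleGraph V) : Prop :=
  ∀ θ ∈ spectrum G, ∃ t : ℤ, θ = (t : ℝ)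

/-- `G` is bipartite. -/
def IsBipartiteGraph (G : SimpleGraph V) : Prop :=
  ∃ s : Set V, ∀ u v, G.Adj u v → (u ∈ s ↔ v ∉ s)

/-- The distance-`i` graph of `G`: two vertices are adjacent iff they are at
distance `i` in `G`. -/
def distGraph (G : SimpleGraph V) (i : ℕ) : SimpleGraph V where
  Adj u v := u ≠ v ∧ G.dist u v = i
  symm := ⟨by
    rintro u v ⟨h1, h2⟩
    exact ⟨h1.symm, by rwa [SimpleGraph.dist_comm]⟩⟩
  loopless := ⟨fun v h => h.1 rfl⟩

/-- `G` is a distance-regular graph of diameter `d` with intersection numbers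
`ia i`, `ib i`, `ic i`. -/
def IsDRGWith (G : SimpleGraph V) (d : ℕ) (ia ib ic : ℕ → ℕ) : Prop :=
  G.Connected ∧ (∃ u v : V, G.dist u v = d) ∧ (∀ u v : V, G.dist u v ≤ d) ∧
    ∀ i ≤ d, ∀ u v : V, G.dist u v = i →
      Nat.card {w : V | G.Adj v w ∧ G.dist u w = i + 1} = ib i ∧
      Nat.card {w : V | G.Adj v w ∧ G.dist u w = i} = ia i ∧
      (1 ≤ i → Nat.card {w : V | G.Adj v w ∧ G.dist u w = i - 1} = ic i)

/-- The complete multipartite graph with `t` parts of size `m`. -/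
def completeMultipartite (t m : ℕ) : SimpleGraph (Fin t × Fin m) where
  Adj u v := u.1 ≠ v.1
  symm := ⟨fun _ _ h => h.symm⟩
  loopless := ⟨fun _ h => h rfl⟩

/-- `H` is a complete multipartite graph with parts of equal size. -/
def IsCompleteMultipartiteEq (H : SimpleGraph V) : Prop :=
  ∃ t m : ℕ, Nonempty (H ≃g completeMultipartite t m)

/-- `G` is a divisible design graph with parameters `(n, k, b, a)`: a Deza graph whose
children are a complete multipartite graph with parts of equal size and its
complement. -/
def IsDDGWith (G : SimpleGraph V) (n k b a : ℕ) : Prop :=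
  IsDezaWith G n k b a ∧ a < b ∧
    ((IsCompleteMultipartiteEq (child G a) ∧ child G b = (child G a)ᶜ) ∨
     (IsCompleteMultipartiteEq (child G b) ∧ child G a = (child G b)ᶜ))

end DezaPaper

open Matrix Polynomial

section AnnihilatingPolynomial

variable {R S : Type*} [CommRing R] [Nontrivial R] [Ring S] [Algebra R S]

theorem exists_monic_natDegree_eq_five_aeval_eq_zero {A B J : S} {k x y z p q r s t : R}
    (hA : A ^ 2 = x • 1 + y • J + z • B) (hB : B ^ 2 = p • 1 + q • B + r • J)
    (hAJ : A * J = k • J) (hBJ : B * J = s • J) (hJB : J * B = s • J)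
    (hJJ : J * J = t • J) :
    ∃ P : R[X], P.Monic ∧ P.natDegree = 5 ∧ aeval A P = 0 := by
  set M := A ^ 2 - x • (1 : S) with hM_def
  have hM : M = y • J + z • B := by rw [hM_def, hA]; abel
  have hquad : M ^ 2 - (z * q) • M - (z ^ 2 * p) • (1 : S) =
      (y ^ 2 * t + 2 * y * z * s + z ^ 2 * r - z * q * y) • J := by
    have hB' : B * B = p • 1 + q • B + r • J := by rw [← sq, hB]
    rw [hM, sq, add_mul, mul_add, mul_add]
    simp only [smul_mul_smul_comm, hJJ, hJB, hBJ, hB']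
    module
  have hAJ' : (A - k • 1) * J = 0 := by rw [sub_mul, hAJ, smul_one_mul, sub_self]
  refine ⟨(X - C k) * ((X ^ 2 - C x) ^ 2 - C (z * q) * (X ^ 2 - C x) - C (z ^ 2 * p)),
    by monicity!, by compute_degree!, ?_⟩
  simp only [map_mul, map_sub, map_pow, aeval_X, aeval_C, Algebra.algebraMap_eq_smul_one,
    _root_.smul_pow, one_pow, smul_mul_smul_comm, mul_one, smul_one_mul, ← hM_def]
  rw [hquad, mul_smul_comm, hAJ', smul_zero]

end AnnihilatingPolynomial

namespace Matrix

variable {n K : Type*} [Fintype n]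

theorem of_one_mul_of_one {α : Type*} [NonAssocSemiring α] :
    (of 1 : Matrix n n α) * of 1 = (Fintype.card n : α) • of 1 := by
  ext u v
  simp [mul_apply]

variable [DecidableEq n] [Field K] {A : Matrix n n K} {P : K[X]}

theorem isRoot_of_isRoot_charpoly (hP : aeval A P = 0) {θ : K} (hθ : A.charpoly.IsRoot θ) :
    P.IsRoot θ := by
  have hσ := spectrum.subset_polynomial_aeval A P
    ⟨θ, mem_spectrum_iff_isRoot_charpoly.mpr hθ, rfl⟩
  rw [hP, spectrum.mem_iff, sub_zero] at hσ
  by_contra hne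
  exact hσ ((Units.mk0 _ hne).isUnit.map _)

theorem card_roots_charpoly_toFinset_le (hP0 : P ≠ 0) (hP : aeval A P = 0) :
    A.charpoly.roots.toFinset.card ≤ P.natDegree :=
  calc A.charpoly.roots.toFinset.card ≤ P.roots.toFinset.card :=
        Finset.card_le_card fun θ hθ => by
          rw [Multiset.mem_toFinset, mem_roots hP0] at *
          exact isRoot_of_isRoot_charpoly hP ((mem_roots (charpoly_monic A).ne_zero).mp hθ)
    _ ≤ P.natDegree := (Multiset.toFinset_card_le _).trans P.card_roots'

end Matrix

namespace SimpleGraph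

variable {V α : Type*} (G : SimpleGraph V) [DecidableRel G.Adj]

theorem adjMatrix_compl_eq_of_one_sub_one_sub [DecidableEq V] [AddCommGroupWithOne α] :
    Gᶜ.adjMatrix α = of 1 - 1 - G.adjMatrix α := by
  rw [← adjMatrix_completeGraph_eq_of_one_sub_one,
    ← IsCompl.adjMatrix_add_adjMatrix_eq_adjMatrix_completeGraph (H := Gᶜ) α isCompl_compl]
  abel

variable [Fintype V]

theorem adjMatrix_sq_apply [DecidableEq V] [Semiring α] (u v : V) :
    (G.adjMatrix α ^ 2) u v = Nat.card (G.commonNeighbors u v) := by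
  rw [adjMatrix_pow_apply_eq_card_walk, ← Nat.card_eq_fintype_card]
  exact congrArg Nat.cast (Nat.card_congr (G.walkLengthTwoEquivCommonNeighbors u v))

variable {G} {d n k ℓ μ : ℕ}

theorem IsRegularOfDegree.adjMatrix_mul_of_one [NonAssocSemiring α]
    (hG : G.IsRegularOfDegree d) : G.adjMatrix α * of 1 = (d : α) • of 1 := by
  ext u v
  simp [adjMatrix_mul_apply, hG u]

theorem IsRegularOfDegree.of_one_mul_adjMatrix [NonAssocSemiring α]
    (hG : G.IsRegularOfDegree d) : of 1 * G.adjMatrix α = (d : α) • of 1 := by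
  ext u v
  simp [mul_adjMatrix_apply, hG v]

theorem IsSRGWith.adjMatrix_sq_eq [DecidableEq V] [CommRing α] (hG : G.IsSRGWith n k ℓ μ) :
    G.adjMatrix α ^ 2 =
      ((k : α) - μ) • 1 + ((ℓ : α) - μ) • G.adjMatrix α + (μ : α) • of 1 := by
  rw [hG.matrix_eq, adjMatrix_compl_eq_of_one_sub_one_sub]
  simp only [← Nat.cast_smul_eq_nsmul α]
  module

end SimpleGraph

namespace DezaPaper

open SimpleGraph

variable {V : Type*}

section

variable [Fintype V] {G : SimpleGraph V}

theorem IsRegular.isRegularOfDegree [DecidableRel G.Adj] {k : ℕ} (hG : IsRegular G k) :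
    G.IsRegularOfDegree k := fun v => by
  rw [← card_neighborSet_eq_degree, ← Nat.card_eq_fintype_card, hG v]

theorem IsSRGraphWith.isSRGWith [DecidableRel G.Adj] {n k ℓ μ : ℕ}
    (hG : IsSRGraphWith G n k ℓ μ) : G.IsSRGWith n k ℓ μ := by
  obtain ⟨hn, hk, -, -, hℓ, hμ⟩ := hG
  simp only [Nat.card_eq_fintype_card] at hn hℓ hμ
  exact ⟨hn, hk.isRegularOfDegree, hℓ, hμ⟩

theorem IsDezaWith.adjMatrix_sq_eq [DecidableEq V] {α : Type*} [Ring α] {n k b a : ℕ}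
    (hG : IsDezaWith G n k b a) :
    G.adjMatrix α ^ 2 =
      ((k : α) - a) • 1 + (a : α) • of 1 + ((b : α) - a) • (child G b).adjMatrix α := by
  obtain ⟨-, hreg, -, -, -, hcard⟩ := hG
  ext u v
  rw [adjMatrix_sq_apply]
  by_cases huv : u = v
  · subst huv
    rw [commonNeighbors_eq, Set.inter_self, hreg u]
    simp
  · simp only [Matrix.add_apply, Matrix.smul_apply, one_apply_ne huv, of_apply, Pi.one_apply,
      adjMatrix_apply, smul_eq_mul]
    by_cases hadj : (child G b).Adj u v
    · rw [if_pos hadj, hadj.2]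
      simp
    · obtain h | h := hcard u v huv
      · exact absurd ⟨huv, h⟩ hadj
      · rw [if_neg hadj, h]
        simp

end

/-- Every strongly Deza graph has at most five distinct eigenvalues. -/
theorem stronglyDeza_atMost_five_eigenvalues [Fintype V] [DecidableEq V]
    (G : SimpleGraph V) (n k b a : ℕ) (hG : IsStronglyDezaWith G n k b a) :
    (spectrum G).toFinset.card ≤ 5 := by
  obtain ⟨hDeza, -, -, _, _, _, hChild⟩ := hG
  have hA := hDeza.2.1.isRegularOfDegree
  have hB := hChild.isSRGWith
  obtain ⟨P, hP_monic, hP_deg, hP⟩ := exists_monic_natDegree_eq_five_aeval_eq_zero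
    (S := Matrix V V ℝ) hDeza.adjMatrix_sq_eq hB.adjMatrix_sq_eq hA.adjMatrix_mul_of_one
    hB.regular.adjMatrix_mul_of_one hB.regular.of_one_mul_adjMatrix of_one_mul_of_one
  exact hP_deg ▸ card_roots_charpoly_toFinset_le hP_monic.ne_zero hP

end DezaPaper
end
end

section
/- If a strongly Deza graph G with parameters (n,k,b,a) has exactly two distinct eigenvalues, then a = 0, b = k − 1 ≥ 1, and G is a disjoint union of complete graphs on k + 1 vertices. -/
open scoped Classical

noncomputable section

namespace DezaPaper

open SimpleGraph

variable {V : Type*}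

/-!
The adjacency matrix `A` of `G` is symmetric, so if its only eigenvalues are `θ₁, θ₂` then
`(A - θ₁)(A - θ₂) = 0`. The `(u, w)` entry of `A²` counts common neighbours, so off the diagonal
this says that distinct non-adjacent vertices have no common neighbour: adjacency is transitive
on distinct vertices, and each component of `G` is a clique, necessarily on `k + 1` vertices.
Two distinct vertices then have `k - 1` or `0` common neighbours according as they are adjacent
or not. Both values `a` and `b` are attained, because the children are not edgeless, and `a < b`
forces `a = 0` and `b = k - 1`.
-/

open Polynomial in
theorem _root_.Matrix.IsHermitian.aeval_eq_zero_of_isRoot_eigenvalues {n 𝕜 : Type*} [Fintype n]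
    [DecidableEq n] [RCLike 𝕜] {A : Matrix n n 𝕜} (hA : A.IsHermitian) {p : 𝕜[X]}
    (hp : ∀ i, p.IsRoot (hA.eigenvalues i : 𝕜)) :
    aeval A p = 0 := by
  have hD : aeval (Matrix.diagonal (RCLike.ofReal ∘ hA.eigenvalues)) p = (0 : Matrix n n 𝕜) := by
    rw [← Matrix.diagonalAlgHom_apply (R := 𝕜), aeval_algHom_apply, aeval_pi_apply]
    simpa [Matrix.diagonal_eq_zero, funext_iff] using hp
  rw [hA.spectral_theorem, aeval_algHom_apply, hD, map_zero]

theorem _root_.SimpleGraph.adjMatrix_mul_self_apply {R : Type*} [Fintype V]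
    [NonAssocSemiring R] (G : SimpleGraph V) [DecidableRel G.Adj] (u v : V) :
    (G.adjMatrix R * G.adjMatrix R) u v = Nat.card (G.commonNeighbors u v) := by
  rw [adjMatrix_mul_apply, Nat.card_eq_card_toFinset]
  simp only [adjMatrix_apply, Finset.sum_boole]
  congr 2
  ext w
  simp [adj_comm, mem_commonNeighbors]

section CliqueUnion

variable {G : SimpleGraph V}

theorem _root_.SimpleGraph.Reachable.adj_of_ne
    (hG : ∀ ⦃u v w⦄, G.Adj u v → G.Adj v w → u ≠ w → G.Adj u w) {u v : V}
    (hr : G.Reachable u v) (huv : u ≠ v) : G.Adj u v := by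
  obtain ⟨p⟩ := hr
  induction p with
  | nil => exact absurd rfl huv
  | @cons u x v hux _ ih =>
    by_cases hxv : x = v
    · exact hxv ▸ hux
    · exact hG hux (ih hxv) huv

theorem _root_.SimpleGraph.neighborSet_eq_insert_commonNeighbors
    (hG : ∀ ⦃u v w⦄, G.Adj u v → G.Adj v w → u ≠ w → G.Adj u w) {u v : V} (h : G.Adj u v) :
    G.neighborSet v = insert u (G.commonNeighbors u v) := by
  ext w
  simp only [mem_neighborSet, Set.mem_insert_iff, mem_commonNeighbors]
  constructor
  · intro hvw
    by_cases hwu : w = u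
    · exact .inl hwu
    · exact .inr ⟨hG h hvw (Ne.symm hwu), hvw⟩
  · rintro (rfl | ⟨-, hvw⟩)
    exacts [h.symm, hvw]

theorem _root_.SimpleGraph.supp_connectedComponentMk_eq_insert_neighborSet
    (hG : ∀ ⦃u v w⦄, G.Adj u v → G.Adj v w → u ≠ w → G.Adj u w) (v : V) :
    (G.connectedComponentMk v).supp = insert v (G.neighborSet v) := by
  ext u
  simp only [ConnectedComponent.mem_supp_iff, ConnectedComponent.eq, Set.mem_insert_iff,
    mem_neighborSet]
  constructor
  · intro h
    by_cases huv : u = v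
    · exact .inl huv
    · exact .inr (h.symm.adj_of_ne hG (Ne.symm huv))
  · rintro (rfl | h)
    exacts [.refl u, h.symm.reachable]

variable [Finite V]

theorem _root_.SimpleGraph.card_commonNeighbors_add_one
    (hG : ∀ ⦃u v w⦄, G.Adj u v → G.Adj v w → u ≠ w → G.Adj u w) {u v : V} (h : G.Adj u v) :
    Nat.card (G.commonNeighbors u v) + 1 = Nat.card (G.neighborSet v) := by
  rw [G.neighborSet_eq_insert_commonNeighbors hG h, Nat.card_coe_set_eq, Nat.card_coe_set_eq,
    Set.ncard_insert_of_notMem (fun hu => G.irrefl hu.1)]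

theorem _root_.SimpleGraph.card_supp_connectedComponentMk
    (hG : ∀ ⦃u v w⦄, G.Adj u v → G.Adj v w → u ≠ w → G.Adj u w) (v : V) :
    Nat.card (G.connectedComponentMk v).supp = Nat.card (G.neighborSet v) + 1 := by
  rw [G.supp_connectedComponentMk_eq_insert_neighborSet hG, Nat.card_coe_set_eq,
    Nat.card_coe_set_eq, Set.ncard_insert_of_notMem (fun hv : v ∈ G.neighborSet v => G.irrefl hv)]

theorem _root_.SimpleGraph.card_commonNeighbors_eq_zero_or_add_one_eq
    (hG : ∀ ⦃u v w⦄, G.Adj u v → G.Adj v w → u ≠ w → G.Adj u w) {u v : V} (huv : u ≠ v) :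
    Nat.card (G.commonNeighbors u v) = 0 ∨
      Nat.card (G.commonNeighbors u v) + 1 = Nat.card (G.neighborSet v) := by
  by_cases h : G.Adj u v
  · exact .inr (G.card_commonNeighbors_add_one hG h)
  · refine .inl ?_
    rw [Nat.card_coe_set_eq, Set.ncard_eq_zero]
    exact Set.eq_empty_of_forall_notMem fun w hw => h (hG hw.1 hw.2.symm huv)

end CliqueUnion

section TwoEigenvalues

variable [Fintype V] [DecidableEq V]

theorem adjMat_eq_adjMatrix (G : SimpleGraph V) : adjMat G = G.adjMatrix ℝ := rfl

variable {G : SimpleGraph V}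

open Polynomial in
theorem adjMatrix_mul_self_eq_of_spectrum_subset {θ₁ θ₂ : ℝ}
    (hθ : ∀ θ ∈ spectrum G, θ = θ₁ ∨ θ = θ₂) :
    G.adjMatrix ℝ * G.adjMatrix ℝ = (θ₁ + θ₂) • G.adjMatrix ℝ - (θ₁ * θ₂) • 1 := by
  have hA := G.isHermitian_adjMatrix ℝ
  have hroot : aeval (G.adjMatrix ℝ) ((X - C θ₁) * (X - C θ₂)) = 0 := by
    refine hA.aeval_eq_zero_of_isRoot_eigenvalues fun i => ?_
    have hi : hA.eigenvalues i ∈ spectrum G := by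
      rw [spectrum, adjMat_eq_adjMatrix, hA.roots_charpoly_eq_eigenvalues]
      simp
    rcases hθ _ hi with h | h <;> simp [h]
  rw [← sub_eq_zero, ← hroot]
  simp only [add_smul, mul_sub, sub_mul, X_mul_C, aeval_sub, map_mul, aeval_X, aeval_C,
    Algebra.algebraMap_eq_smul_one, Algebra.smul_mul_assoc, one_mul, Algebra.mul_smul_comm,
    mul_one, smul_smul, mul_comm θ₂]
  abel

theorem adj_of_adj_of_adj_of_spectrum_subset {θ₁ θ₂ : ℝ}
    (hθ : ∀ θ ∈ spectrum G, θ = θ₁ ∨ θ = θ₂) ⦃u v w : V⦄ (huv : G.Adj u v) (hvw : G.Adj v w)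
    (huw : u ≠ w) : G.Adj u w := by
  by_contra hnadj
  have hempty : Nat.card (G.commonNeighbors u w) = 0 := by
    have h := congrFun₂ (adjMatrix_mul_self_eq_of_spectrum_subset hθ) u w
    rw [adjMatrix_mul_self_apply] at h
    simpa only [Matrix.sub_apply, Matrix.smul_apply, adjMatrix_apply, if_neg hnadj,
      Matrix.one_apply_ne huw, smul_zero, sub_zero, Nat.cast_eq_zero] using h
  have : Nonempty (G.commonNeighbors u w) := ⟨v, huv, hvw.symm⟩
  exact (Nat.card_pos.ne' hempty).elim

end TwoEigenvalues

/-- If a strongly Deza graph `G` with parameters `(n,k,b,a)` has exactly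
two distinct eigenvalues, then `a = 0`, `b = k - 1 ≥ 1`, and `G` is a disjoint union of
complete graphs on `k + 1` vertices. -/
theorem stronglyDeza_two_eigenvalues [Fintype V] [DecidableEq V]
    (G : SimpleGraph V) (n k b a : ℕ) (hG : IsStronglyDezaWith G n k b a)
    (h2 : (spectrum G).toFinset.card = 2) :
    a = 0 ∧ b = k - 1 ∧ 1 ≤ b ∧
      (∀ u v : V, G.Adj u v ↔ (u ≠ v ∧ G.Reachable u v)) ∧
      (∀ c : G.ConnectedComponent, Nat.card c.supp = k + 1) := by
  obtain ⟨⟨-, hreg, -, -, -, -⟩, hab, ⟨-, -, -, -, -, -, hA, -⟩, ⟨-, -, -, -, -, -, hB, -⟩⟩ := hG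
  obtain ⟨θ₁, θ₂, -, hθ⟩ := Finset.card_eq_two.mp h2
  have htrans : ∀ ⦃u v w⦄, G.Adj u v → G.Adj v w → u ≠ w → G.Adj u w :=
    adj_of_adj_of_adj_of_spectrum_subset (θ₁ := θ₁) (θ₂ := θ₂) fun θ hθG => by
      simpa [hθ] using Multiset.mem_toFinset.2 hθG
  have hchild : ∀ c, child G c ≠ ⊥ → c = 0 ∨ c + 1 = k := by
    intro c hc
    obtain ⟨u, v, huv, rfl⟩ := ne_bot_iff_exists_adj.mp hc
    simpa only [hreg v] using G.card_commonNeighbors_eq_zero_or_add_one_eq htrans huv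
  have hab_values : a = 0 ∧ b + 1 = k := by
    rcases hchild a hA with _ | _ <;> rcases hchild b hB with _ | _ <;> omega
  refine ⟨hab_values.1, by omega, by omega, fun u v => ⟨fun h => ⟨h.ne, h.reachable⟩,
    fun ⟨huv, hr⟩ => hr.adj_of_ne htrans huv⟩, fun c => c.ind fun v => ?_⟩
  rw [G.card_supp_connectedComponentMk htrans, hreg v]

end DezaPaper
end
end
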